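/- arXiv:1003.3653 — 4 statements merged into one kernel-verified Lean document; each statement's English description precedes it below -/
import Mathlib

section
/- For every r ≥ 0 one has p''(r) = r(r⁴ − 2r² − 6)/((1+r²)·((1+r²)(2+r²))^{3/2}). Moreover, with r₀ = √(1+√7), one has p''(r) < 0 for 0 < r < r₀, p''(r₀) = 0, and p''(r) > 0 for r > r₀; in particular r₀ is the unique positive zero of p''. -/
noncomputable def q (r : ℝ) : ℝ := Real.sqrt ((2 + r ^ 2) / (1 + r ^ 2))
noncomputable def p (r : ℝ) : ℝ := r * q r
noncomputable def r₀ : ℝ := Real.sqrt (1 + Real.sqrt 7)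

/-!
Writing P = (1 + r²)(2 + r²), one has p = r(2 + r²)/√P, and differentiating a quotient u/√P
gives again such a quotient: p' = ((r⁴ + 2r² + 2)/(1 + r²))/√P and
p'' = r(r⁴ - 2r² - 6)/((1 + r²) P √P). Since r₀² = 1 + √7, the quartic factors as
(r² - r₀²)(r² + √7 - 1), so for r > 0 the sign of p'' is the sign of r - r₀.
-/

open Real

theorem HasDerivAt.div_sqrt {f g : ℝ → ℝ} {f' g' x : ℝ} (hf : HasDerivAt f f' x)
    (hg : HasDerivAt g g' x) (hx : 0 < g x) :
    HasDerivAt (fun y => f y / √(g y)) ((f' * g x - f x * g' / 2) / (g x * √(g x))) x := by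
  refine (hf.div (hg.sqrt hx.ne') (sqrt_ne_zero'.2 hx)).congr_deriv ?_
  have hs : 0 < √(g x) := sqrt_pos.2 hx
  field_simp
  rw [sq_sqrt hx.le]
  ring

theorem Real.rpow_three_halves {x : ℝ} (hx : 0 ≤ x) : x ^ ((3 : ℝ) / 2) = x * √x := by
  rw [show (3 : ℝ) / 2 = 1 + 1 / 2 by norm_num, rpow_add' hx (by norm_num), rpow_one,
    sqrt_eq_rpow]

theorem p_eq_div_sqrt : p = fun r => r * (2 + r ^ 2) / √((1 + r ^ 2) * (2 + r ^ 2)) := by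
  funext r
  have h : 0 < 2 + r ^ 2 := by positivity
  rw [p, q, sqrt_div' _ (by positivity : (0 : ℝ) ≤ 1 + r ^ 2), sqrt_mul (by positivity)]
  field_simp
  rw [sq_sqrt h.le]

theorem hasDerivAt_p (r : ℝ) :
    HasDerivAt p ((r ^ 4 + 2 * r ^ 2 + 2) / (1 + r ^ 2) / √((1 + r ^ 2) * (2 + r ^ 2))) r := by
  rw [p_eq_div_sqrt]
  have hu : HasDerivAt (fun x : ℝ => x * (2 + x ^ 2)) (2 + 3 * r ^ 2) r :=
    ((hasDerivAt_id' r).mul ((hasDerivAt_pow 2 r).const_add 2)).congr_deriv (by ring)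
  have hP : HasDerivAt (fun x : ℝ => (1 + x ^ 2) * (2 + x ^ 2)) (6 * r + 4 * r ^ 3) r :=
    (((hasDerivAt_pow 2 r).const_add 1).mul ((hasDerivAt_pow 2 r).const_add 2)).congr_deriv
      (by ring)
  convert hu.div_sqrt hP (by positivity) using 1
  field_simp
  ring

theorem deriv_p :
    deriv p = fun r => (r ^ 4 + 2 * r ^ 2 + 2) / (1 + r ^ 2) / √((1 + r ^ 2) * (2 + r ^ 2)) :=
  funext fun r => (hasDerivAt_p r).deriv

theorem hasDerivAt_deriv_p (r : ℝ) :
    HasDerivAt (deriv p) (r * (r ^ 4 - 2 * r ^ 2 - 6) /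
      ((1 + r ^ 2) * ((1 + r ^ 2) * (2 + r ^ 2) * √((1 + r ^ 2) * (2 + r ^ 2))))) r := by
  rw [deriv_p]
  have hu : HasDerivAt (fun x : ℝ => (x ^ 4 + 2 * x ^ 2 + 2) / (1 + x ^ 2))
      (2 * r ^ 3 * (2 + r ^ 2) / (1 + r ^ 2) ^ 2) r := by
    have hnum : HasDerivAt (fun x : ℝ => x ^ 4 + 2 * x ^ 2 + 2) (4 * r ^ 3 + 4 * r) r :=
      (((hasDerivAt_pow 4 r).add ((hasDerivAt_pow 2 r).const_mul 2)).add_const 2).congr_deriv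
        (by ring)
    refine (hnum.div ((hasDerivAt_pow 2 r).const_add 1) (by positivity)).congr_deriv ?_
    field_simp
    ring
  have hP : HasDerivAt (fun x : ℝ => (1 + x ^ 2) * (2 + x ^ 2)) (6 * r + 4 * r ^ 3) r :=
    (((hasDerivAt_pow 2 r).const_add 1).mul ((hasDerivAt_pow 2 r).const_add 2)).congr_deriv
      (by ring)
  convert hu.div_sqrt hP (by positivity) using 1
  field_simp
  ring

theorem deriv_deriv_p (r : ℝ) :
    deriv (deriv p) r = r * (r ^ 4 - 2 * r ^ 2 - 6) /
      ((1 + r ^ 2) * ((1 + r ^ 2) * (2 + r ^ 2)) ^ ((3 : ℝ) / 2)) := by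
  rw [(hasDerivAt_deriv_p r).deriv, rpow_three_halves (by positivity)]

theorem sq_r₀ : r₀ ^ 2 = 1 + √7 := sq_sqrt (by positivity)

theorem r₀_pos : 0 < r₀ := sqrt_pos.2 (by positivity)

theorem one_lt_sqrt_seven : 1 < √7 := by
  rw [lt_sqrt zero_le_one]; norm_num

theorem deriv_deriv_p_eq_mul (r : ℝ) :
    deriv (deriv p) r = (r - r₀) * (r * (r + r₀) * (r ^ 2 + √7 - 1) /
      ((1 + r ^ 2) * ((1 + r ^ 2) * (2 + r ^ 2)) ^ ((3 : ℝ) / 2))) := by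
  have h7 : √7 ^ 2 = 7 := sq_sqrt (by norm_num)
  rw [deriv_deriv_p, mul_div_assoc']
  congr 1
  linear_combination r * (r ^ 2 + √7 - 1) * sq_r₀ + r * h7

theorem deriv_deriv_p_cofactor_pos {r : ℝ} (hr : 0 < r) :
    0 < r * (r + r₀) * (r ^ 2 + √7 - 1) /
      ((1 + r ^ 2) * ((1 + r ^ 2) * (2 + r ^ 2)) ^ ((3 : ℝ) / 2)) := by
  have h7 : 0 < r ^ 2 + √7 - 1 := by nlinarith [one_lt_sqrt_seven]
  have := r₀_pos
  exact div_pos (mul_pos (mul_pos hr (by positivity)) h7) (by positivity)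

theorem stmt2 :
    (∀ r : ℝ, 0 ≤ r →
      deriv (deriv p) r =
        r * (r ^ 4 - 2 * r ^ 2 - 6) /
          ((1 + r ^ 2) * ((1 + r ^ 2) * (2 + r ^ 2)) ^ ((3 : ℝ) / 2))) ∧
    (∀ r : ℝ, 0 < r → r < r₀ → deriv (deriv p) r < 0) ∧
    deriv (deriv p) r₀ = 0 ∧
    (∀ r : ℝ, r₀ < r → 0 < deriv (deriv p) r) ∧
    (∀ r : ℝ, 0 < r → deriv (deriv p) r = 0 → r = r₀) := by
  refine ⟨fun r _ => deriv_deriv_p r, fun r hr hr₀ => ?_, ?_, fun r hr₀ => ?_,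
    fun r hr h => ?_⟩
  · rw [deriv_deriv_p_eq_mul]
    exact mul_neg_of_neg_of_pos (sub_neg.2 hr₀) (deriv_deriv_p_cofactor_pos hr)
  · rw [deriv_deriv_p_eq_mul, sub_self, zero_mul]
  · rw [deriv_deriv_p_eq_mul]
    exact mul_pos (sub_pos.2 hr₀) (deriv_deriv_p_cofactor_pos (r₀_pos.trans hr₀))
  · rw [deriv_deriv_p_eq_mul] at h
    exact sub_eq_zero.1 ((mul_eq_zero.1 h).resolve_right (deriv_deriv_p_cofactor_pos hr).ne')
end

section
/- There exists a constant C > 0 such that for all r, s ≥ 0, |p'(r) − p'(s)| ≤ C·|r − s| / (⟨max(r,s)⟩ · ⟨min(r,s)⟩²). -/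
/-!
With `u = 1 + r²` one computes `p' = (u² + 1) / (u² q)`, so that `|p' - 1| ≤ ⟨r⟩⁻²` and
`|p''| ≤ 8 ⟨r⟩⁻³`. These two decay bounds alone give the estimate. For `0 ≤ s ≤ r` with
`⟨r⟩ ≤ 2⟨s⟩`, the mean value theorem and the bound on `p''` over `[s, r]` give
`|p'(r) - p'(s)| ≤ 8 (r - s) / ⟨s⟩³ ≤ 16 (r - s) / (⟨r⟩ ⟨s⟩²)`. Otherwise `⟨·⟩` being
1-Lipschitz gives `r - s ≥ ⟨r⟩ - ⟨s⟩ > ⟨r⟩ / 2`, and the crude bound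
`|p'(r) - p'(s)| ≤ 2 / ⟨s⟩²` suffices.
-/

open Real

noncomputable def japaneseBracket (a : ℝ) : ℝ := √(1 + a ^ 2)

theorem japaneseBracket_pos (a : ℝ) : 0 < japaneseBracket a := sqrt_pos.2 (by positivity)

theorem sq_japaneseBracket (a : ℝ) : japaneseBracket a ^ 2 = 1 + a ^ 2 :=
  sq_sqrt (by positivity)

theorem abs_le_japaneseBracket (a : ℝ) : |a| ≤ japaneseBracket a := abs_le_sqrt (by linarith)

theorem japaneseBracket_le_japaneseBracket {a b : ℝ} (ha : 0 ≤ a) (hab : a ≤ b) :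
    japaneseBracket a ≤ japaneseBracket b :=
  sqrt_le_sqrt (by nlinarith)

theorem japaneseBracket_sub_japaneseBracket_le (a b : ℝ) :
    japaneseBracket a - japaneseBracket b ≤ |a - b| := by
  have hb := abs_le_japaneseBracket b
  rw [sub_le_iff_le_add, japaneseBracket, sqrt_le_left (by positivity [japaneseBracket_pos b]),
    add_sq, sq_japaneseBracket b]
  nlinarith [abs_mul_abs_self (a - b), abs_mul b (a - b), le_abs_self (b * (a - b)),
    mul_le_mul_of_nonneg_right hb (abs_nonneg (a - b))]

theorem nonneg_of_abs_le_div_japaneseBracket_pow {y A x : ℝ} {n : ℕ}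
    (h : |y| ≤ A / japaneseBracket x ^ n) : 0 ≤ A := by
  have := (abs_nonneg y).trans h
  rwa [le_div_iff₀ (pow_pos (japaneseBracket_pos x) n), zero_mul] at this

section Decay

variable {f f' : ℝ → ℝ} {A B L : ℝ}

theorem abs_sub_le_of_abs_deriv_le {r s : ℝ} (hf : ∀ x, 0 ≤ x → HasDerivAt f (f' x) x)
    (hf' : ∀ x, 0 ≤ x → |f' x| ≤ A / japaneseBracket x ^ 3) (hs : 0 ≤ s) (hsr : s ≤ r) :
    |f r - f s| ≤ A / japaneseBracket s ^ 3 * (r - s) := by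
  have hA := nonneg_of_abs_le_div_japaneseBracket_pow (hf' s hs)
  have hbound : ∀ x ∈ Set.Icc s r, ‖f' x‖ ≤ A / japaneseBracket s ^ 3 := fun x hx =>
    (hf' x (hs.trans hx.1)).trans <| div_le_div_of_nonneg_left hA
      (pow_pos (japaneseBracket_pos s) 3) <|
      pow_le_pow_left₀ (japaneseBracket_pos s).le (japaneseBracket_le_japaneseBracket hs hx.1) 3
  have h := (convex_Icc s r).norm_image_sub_le_of_norm_hasDerivWithin_le
    (fun x hx => (hf x (hs.trans hx.1)).hasDerivWithinAt) hbound
    (Set.left_mem_Icc.2 hsr) (Set.right_mem_Icc.2 hsr)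
  rwa [norm_eq_abs, norm_eq_abs, abs_of_nonneg (sub_nonneg.2 hsr)] at h

theorem abs_sub_le_div_japaneseBracket_of_le {r s : ℝ}
    (hf : ∀ x, 0 ≤ x → HasDerivAt f (f' x) x)
    (hf' : ∀ x, 0 ≤ x → |f' x| ≤ A / japaneseBracket x ^ 3)
    (hfL : ∀ x, 0 ≤ x → |f x - L| ≤ B / japaneseBracket x ^ 2) (hs : 0 ≤ s) (hsr : s ≤ r) :
    |f r - f s| ≤ (2 * A + 4 * B) * (r - s) / (japaneseBracket r * japaneseBracket s ^ 2) := by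
  have hA := nonneg_of_abs_le_div_japaneseBracket_pow (hf' s hs)
  have hB := nonneg_of_abs_le_div_japaneseBracket_pow (hfL s hs)
  have hrs : 0 ≤ r - s := sub_nonneg.2 hsr
  have ha := japaneseBracket_pos s
  have hb := japaneseBracket_pos r
  have hab := japaneseBracket_le_japaneseBracket hs hsr
  rw [le_div_iff₀ (by positivity)]
  rcases le_or_gt (japaneseBracket r) (2 * japaneseBracket s) with hnear | hfar
  · have h := abs_sub_le_of_abs_deriv_le hf hf' hs hsr
    rw [div_mul_eq_mul_div, le_div_iff₀ (by positivity)] at h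
    nlinarith [mul_le_mul_of_nonneg_left hnear
      (by positivity : 0 ≤ |f r - f s| * japaneseBracket s ^ 2)]
  · have hdist : japaneseBracket r - japaneseBracket s ≤ r - s :=
      (japaneseBracket_sub_japaneseBracket_le r s).trans_eq (abs_of_nonneg hrs)
    have h : |f r - f s| ≤ B / japaneseBracket r ^ 2 + B / japaneseBracket s ^ 2 :=
      (abs_sub_le (f r) L (f s)).trans <|
        add_le_add (hfL r (hs.trans hsr)) ((abs_sub_comm L (f s)).trans_le (hfL s hs))
    have h' : |f r - f s| * japaneseBracket s ^ 2 ≤ 2 * B := by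
      rw [← le_div_iff₀ (by positivity)]
      refine h.trans ?_
      rw [two_mul, add_div]
      gcongr
    nlinarith [mul_le_mul_of_nonneg_right h' hb.le]

theorem abs_sub_le_div_japaneseBracket_max_min {r s : ℝ}
    (hf : ∀ x, 0 ≤ x → HasDerivAt f (f' x) x)
    (hf' : ∀ x, 0 ≤ x → |f' x| ≤ A / japaneseBracket x ^ 3)
    (hfL : ∀ x, 0 ≤ x → |f x - L| ≤ B / japaneseBracket x ^ 2) (hr : 0 ≤ r) (hs : 0 ≤ s) :
    |f r - f s| ≤
      (2 * A + 4 * B) * |r - s| / (japaneseBracket (max r s) * japaneseBracket (min r s) ^ 2) := by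
  rcases le_total s r with hsr | hrs
  · rw [max_eq_left hsr, min_eq_right hsr, abs_of_nonneg (sub_nonneg.2 hsr)]
    exact abs_sub_le_div_japaneseBracket_of_le hf hf' hfL hs hsr
  · rw [max_eq_right hrs, min_eq_left hrs, abs_sub_comm (f r), abs_sub_comm r,
      abs_of_nonneg (sub_nonneg.2 hrs)]
    exact abs_sub_le_div_japaneseBracket_of_le hf hf' hfL hr hrs

end Decay

theorem q_pos (r : ℝ) : 0 < q r := sqrt_pos.2 (by positivity)

theorem one_le_q (r : ℝ) : 1 ≤ q r :=
  one_le_sqrt.2 <| (one_le_div (by positivity)).2 (by linarith)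

theorem one_add_sq_mul_q_sq (r : ℝ) : (1 + r ^ 2) * q r ^ 2 = 2 + r ^ 2 := by
  rw [q, sq_sqrt (by positivity)]
  field_simp

theorem hasDerivAt_q (r : ℝ) : HasDerivAt q (-r / ((1 + r ^ 2) ^ 2 * q r)) r := by
  have hquot : HasDerivAt (fun x : ℝ => (2 + x ^ 2) / (1 + x ^ 2))
      ((2 * r * (1 + r ^ 2) - (2 + r ^ 2) * (2 * r)) / (1 + r ^ 2) ^ 2) r :=
    (((hasDerivAt_pow 2 r).const_add 2).div ((hasDerivAt_pow 2 r).const_add 1)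
      (by positivity)).congr_deriv (by ring)
  refine (hquot.sqrt (by positivity)).congr_deriv ?_
  have hq := q_pos r
  rw [show √((2 + r ^ 2) / (1 + r ^ 2)) = q r from rfl]
  field_simp
  ring

noncomputable def pDeriv (r : ℝ) : ℝ := ((1 + r ^ 2) ^ 2 + 1) / ((1 + r ^ 2) ^ 2 * q r)

noncomputable def pDeriv2 (r : ℝ) : ℝ :=
  r * ((1 + r ^ 2) ^ 2 - 4 * (1 + r ^ 2) - 3) / ((1 + r ^ 2) ^ 4 * q r ^ 3)

theorem hasDerivAt_p_s5 (r : ℝ) : HasDerivAt p (pDeriv r) r := by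
  refine ((hasDerivAt_id r).mul (hasDerivAt_q r)).congr_deriv ?_
  have hq := q_pos r
  rw [pDeriv, id_eq]
  field_simp
  linear_combination (1 + r ^ 2) * one_add_sq_mul_q_sq r

theorem hasDerivAt_pDeriv (r : ℝ) : HasDerivAt pDeriv (pDeriv2 r) r := by
  have hnum : HasDerivAt (fun x : ℝ => (1 + x ^ 2) ^ 2 + 1) (2 * (1 + r ^ 2) * (2 * r)) r :=
    ((((hasDerivAt_pow 2 r).const_add 1).pow 2).add_const 1).congr_deriv (by simp)
  have hden : HasDerivAt (fun x : ℝ => (1 + x ^ 2) ^ 2 * q x)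
      (2 * (1 + r ^ 2) * (2 * r) * q r + (1 + r ^ 2) ^ 2 * (-r / ((1 + r ^ 2) ^ 2 * q r))) r :=
    ((((hasDerivAt_pow 2 r).const_add 1).pow 2).mul (hasDerivAt_q r)).congr_deriv (by simp)
  have hq := q_pos r
  refine (hnum.div hden (by positivity)).congr_deriv ?_
  rw [pDeriv2]
  field_simp
  linear_combination -4 * r * one_add_sq_mul_q_sq r

theorem abs_pDeriv2_le (r : ℝ) : |pDeriv2 r| ≤ 8 / japaneseBracket r ^ 3 := by
  have hq := one_le_q r
  have hq0 := q_pos r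
  have hj := japaneseBracket_pos r
  have hr := abs_le_japaneseBracket r
  rw [pDeriv2, abs_div, abs_mul, abs_of_pos (by positivity : 0 < (1 + r ^ 2) ^ 4 * q r ^ 3),
    ← sq_japaneseBracket r, div_le_div_iff₀ (by positivity) (by positivity)]
  set j := japaneseBracket r
  have hj1 : 1 ≤ j ^ 2 := by nlinarith [sq_japaneseBracket r, sq_nonneg r]
  have hpoly : |(j ^ 2) ^ 2 - 4 * j ^ 2 - 3| ≤ 8 * (j ^ 2) ^ 2 := by
    rw [abs_le]; constructor <;> nlinarith
  calc |r| * |(j ^ 2) ^ 2 - 4 * j ^ 2 - 3| * j ^ 3 ≤ j * (8 * (j ^ 2) ^ 2) * j ^ 3 := by gcongr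
    _ = 8 * (j ^ 2) ^ 4 := by ring
    _ ≤ 8 * ((j ^ 2) ^ 4 * q r ^ 3) := by
      gcongr; exact le_mul_of_one_le_right (by positivity) (one_le_pow₀ hq)

theorem abs_pDeriv_sub_one_le (r : ℝ) : |pDeriv r - 1| ≤ 1 / japaneseBracket r ^ 2 := by
  have hq := one_le_q r
  have hqsq := one_add_sq_mul_q_sq r
  rw [sq_japaneseBracket]
  set u := 1 + r ^ 2 with hu_def
  have hu : 1 ≤ u := by nlinarith [sq_nonneg r]
  have hden : 0 < u ^ 2 * q r := by positivity
  rw [pDeriv, ← hu_def, div_sub_one hden.ne', abs_div, abs_of_pos hden,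
    div_le_div_iff₀ hden (by positivity), one_mul]
  have hqsq' : u * q r ^ 2 = u + 1 := by linarith
  have hnum : |u ^ 2 + 1 - u ^ 2 * q r| ≤ u * q r := by
    rw [abs_le]
    constructor
    · nlinarith [mul_le_mul_of_nonneg_left (by linarith : 2 ≤ q r + 1)
        (by nlinarith : 0 ≤ u ^ 2 * (q r - 1))]
    · nlinarith
  nlinarith [mul_le_mul_of_nonneg_right hnum (by linarith : 0 ≤ u)]

theorem stmt5 :
    ∃ C : ℝ, 0 < C ∧
      ∀ r s : ℝ, 0 ≤ r → 0 ≤ s →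
        |deriv p r - deriv p s| ≤
          C * |r - s| /
            (Real.sqrt (1 + max r s ^ 2) * Real.sqrt (1 + min r s ^ 2) ^ 2) := by
  refine ⟨2 * 8 + 4 * 1, by norm_num, fun r s hr hs => ?_⟩
  rw [(hasDerivAt_p_s5 r).deriv, (hasDerivAt_p_s5 s).deriv]
  exact abs_sub_le_div_japaneseBracket_max_min (fun x _ => hasDerivAt_pDeriv x)
    (fun x _ => abs_pDeriv2_le x) (fun x _ => abs_pDeriv_sub_one_le x) hr hs
end

section
/- There exists a constant c₀ > 0 with the following property. Let a, b, c ∈ ℝ³ be nonzero vectors with a = b + c and |c| ≤ min(|a|, |b|). Then |p(|a|) − p(|b|) − p(|c|)| ≥ c₀·( |c|·((1 − cos[c,a]) + (1 − cos[b,a])) + |a||b||c| / ((1 + |a||b|)(1 + |c|²)) ), where cos[u,v] = ⟨u,v⟩/(|u||v|) denotes the cosine of the angle between nonzero vectors u and v. -/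
open scoped RealInnerProductSpace

/-!
Put α = ‖a‖, β = ‖b‖, γ = ‖c‖, so that γ ≤ β ≤ α + γ and α ≤ β + γ. Since
p(β) + p(γ) − p(α) = [p(β + γ) − p(α)] + [p(β) + p(γ) − p(β + γ)], it suffices to bound the two
brackets from below. As p(r)² − r² = 1 − (1 + r²)⁻¹ is increasing and p(r) ≤ 3r/2, the first
bracket is at least 2(β + γ − α)/3; by the law of cosines both 1 − cos[c,a] and 1 − cos[b,a]
carry the factor β + γ − α, so it controls the angle term. The second bracket is the
subadditivity defect of p; as q is decreasing it is at least γ (q(γ) − q(β + γ)), which is of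
order β²γ / ((1 + β²)(1 + γ²)) and dominates the remaining term because α ≤ 2β.
-/

lemma q_sq (r : ℝ) : q r ^ 2 = 1 + (1 + r ^ 2)⁻¹ := by
  rw [q, Real.sq_sqrt (by positivity)]
  field_simp
  ring

lemma q_nonneg (r : ℝ) : 0 ≤ q r := Real.sqrt_nonneg _

lemma q_le_three_halves (r : ℝ) : q r ≤ 3 / 2 := by
  rw [q, Real.sqrt_le_left (by norm_num), div_le_iff₀ (by positivity)]
  nlinarith [sq_nonneg r]

lemma q_antitoneOn : AntitoneOn q (Set.Ici 0) := by
  intro x (hx : 0 ≤ x) y _ hxy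
  rw [← pow_le_pow_iff_left₀ (q_nonneg y) (q_nonneg x) two_ne_zero, q_sq, q_sq]
  gcongr

lemma p_sq (r : ℝ) : p r ^ 2 = 1 + r ^ 2 - (1 + r ^ 2)⁻¹ := by
  rw [p, mul_pow, q_sq]
  field_simp
  ring

lemma p_nonneg {r : ℝ} (hr : 0 ≤ r) : 0 ≤ p r := mul_nonneg hr (q_nonneg r)

lemma sq_sub_sq_le_p_sq_sub_p_sq {x y : ℝ} (hx : 0 ≤ x) (hxy : x ≤ y) :
    y ^ 2 - x ^ 2 ≤ p y ^ 2 - p x ^ 2 := by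
  have : (1 + y ^ 2)⁻¹ ≤ (1 + x ^ 2)⁻¹ := by gcongr
  rw [p_sq, p_sq]
  linarith

lemma p_monotoneOn : MonotoneOn p (Set.Ici 0) := by
  intro x (hx : 0 ≤ x) y (hy : 0 ≤ y) hxy
  rw [← pow_le_pow_iff_left₀ (p_nonneg hx) (p_nonneg hy) two_ne_zero]
  linarith [sq_sub_sq_le_p_sq_sub_p_sq hx hxy, pow_le_pow_left₀ hx hxy 2]

lemma two_thirds_mul_sub_le_p_sub_p {x y : ℝ} (hx : 0 ≤ x) (hxy : x ≤ y) :
    2 / 3 * (y - x) ≤ p y - p x := by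
  rcases hxy.eq_or_lt with rfl | hlt
  · simp
  have hsq : (y - x) * (y + x) ≤ (p y - p x) * (p y + p x) := by
    linarith [sq_sub_sq_le_p_sq_sub_p_sq hx hxy]
  have hmono : 0 ≤ p y - p x := sub_nonneg.2 (p_monotoneOn hx (hx.trans hxy) hxy)
  have hsum : p y + p x ≤ 3 / 2 * (y + x) := by
    simp only [p]
    nlinarith [q_le_three_halves x, q_le_three_halves y]
  have : (y - x) * (y + x) ≤ 3 / 2 * (p y - p x) * (y + x) := by
    nlinarith [mul_le_mul_of_nonneg_left hsum hmono]
  nlinarith [le_of_mul_le_mul_right this (by linarith : 0 < y + x)]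

lemma sq_sub_sq_div_le_q_sub_q {x y : ℝ} (hx : 0 ≤ x) (hxy : x ≤ y) :
    (y ^ 2 - x ^ 2) / (3 * ((1 + x ^ 2) * (1 + y ^ 2))) ≤ q x - q y := by
  have hmono : 0 ≤ q x - q y := sub_nonneg.2 (q_antitoneOn hx (hx.trans hxy : 0 ≤ y) hxy)
  have hsum : q x + q y ≤ 3 := by linarith [q_le_three_halves x, q_le_three_halves y]
  have hprod : (q x - q y) * (q x + q y) = (y ^ 2 - x ^ 2) / ((1 + x ^ 2) * (1 + y ^ 2)) := by
    rw [show (q x - q y) * (q x + q y) = q x ^ 2 - q y ^ 2 by ring, q_sq, q_sq]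
    field_simp
    ring
  rw [mul_comm 3, ← div_div, ← hprod, div_le_iff₀ three_pos]
  exact mul_le_mul_of_nonneg_left hsum hmono

lemma le_p_add_p_sub_p_add {β γ : ℝ} (hγ : 0 ≤ γ) (hγβ : γ ≤ β) :
    β ^ 2 * γ / ((1 + β ^ 2) * (1 + γ ^ 2)) ≤ 12 * (p β + p γ - p (β + γ)) := by
  have hβ : 0 ≤ β := hγ.trans hγβ
  have hsplit : p β + p γ - p (β + γ) = β * (q β - q (β + γ)) + γ * (q γ - q (β + γ)) := by
    simp only [p]; ring
  have hqβ : 0 ≤ q β - q (β + γ) :=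
    sub_nonneg.2 (q_antitoneOn hβ (by positivity : 0 ≤ β + γ) (by linarith))
  have hqγ := sq_sub_sq_div_le_q_sub_q hγ (by linarith : γ ≤ β + γ)
  have hbound : β ^ 2 * γ / ((1 + β ^ 2) * (1 + γ ^ 2)) ≤
      12 * (γ * (((β + γ) ^ 2 - γ ^ 2) / (3 * ((1 + γ ^ 2) * (1 + (β + γ) ^ 2))))) := by
    rw [mul_div_assoc', mul_div_assoc', div_le_div_iff₀ (by positivity) (by positivity)]
    have h1 : β ^ 2 ≤ (β + γ) ^ 2 - γ ^ 2 := by nlinarith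
    have h2 : 1 + (β + γ) ^ 2 ≤ 4 * (1 + β ^ 2) := by nlinarith
    have h3 : β ^ 2 * (1 + (β + γ) ^ 2) ≤ ((β + γ) ^ 2 - γ ^ 2) * (4 * (1 + β ^ 2)) :=
      mul_le_mul h1 h2 (by positivity) (by nlinarith)
    nlinarith [mul_le_mul_of_nonneg_left h3 (by positivity : 0 ≤ 3 * γ * (1 + γ ^ 2))]
  rw [hsplit]
  nlinarith [mul_le_mul_of_nonneg_left hqγ hγ, mul_nonneg hβ hqβ]

lemma mul_mul_div_le_two_mul_sq_mul_div {α β γ : ℝ} (hα : 0 ≤ α) (hαβ : α ≤ 2 * β) (hγ : 0 ≤ γ) :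
    α * β * γ / ((1 + α * β) * (1 + γ ^ 2)) ≤ 2 * (β ^ 2 * γ / ((1 + β ^ 2) * (1 + γ ^ 2))) := by
  have hβ : 0 ≤ β := by linarith
  rw [mul_div_assoc', div_le_div_iff₀ (by positivity) (by positivity)]
  have key : α * (1 + β ^ 2) ≤ 2 * β * (1 + α * β) := by nlinarith [mul_nonneg hα (sq_nonneg β)]
  nlinarith [mul_le_mul_of_nonneg_left key (by positivity : 0 ≤ β * γ * (1 + γ ^ 2))]

section InnerProductSpace

variable {E : Type*} [NormedAddCommGroup E] [InnerProductSpace ℝ E]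

lemma one_sub_inner_div_norm_mul_norm_add {u v : E} (hu : u ≠ 0) (huv : u + v ≠ 0) :
    1 - ⟪u, u + v⟫ / (‖u‖ * ‖u + v‖) =
      (‖u‖ + ‖v‖ - ‖u + v‖) * (‖u + v‖ + ‖v‖ - ‖u‖) / (2 * ‖u‖ * ‖u + v‖) := by
  have hpol := real_inner_eq_norm_add_mul_self_sub_norm_mul_self_sub_norm_mul_self_div_two u v
  rw [inner_add_right, real_inner_self_eq_norm_sq, hpol]
  have := norm_ne_zero_iff.2 hu
  have := norm_ne_zero_iff.2 huv
  field_simp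
  ring

lemma norm_mul_one_sub_cos_add_one_sub_cos_le {b c : E} (hb : b ≠ 0) (hc : c ≠ 0)
    (hbc : b + c ≠ 0) (hcb : ‖c‖ ≤ ‖b‖) :
    ‖c‖ * ((1 - ⟪c, b + c⟫ / (‖c‖ * ‖b + c‖)) + (1 - ⟪b, b + c⟫ / (‖b‖ * ‖b + c‖))) ≤
      2 * (‖b‖ + ‖c‖ - ‖b + c‖) := by
  have hcb' : c + b ≠ 0 := by rwa [add_comm]
  rw [one_sub_inner_div_norm_mul_norm_add hb hbc, add_comm b c,
    one_sub_inner_div_norm_mul_norm_add hc hcb']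
  have hα : 0 < ‖c + b‖ := norm_pos_iff.2 hcb'
  have hβ : 0 < ‖b‖ := norm_pos_iff.2 hb
  have hγ : 0 < ‖c‖ := norm_pos_iff.2 hc
  have htri : ‖c + b‖ ≤ ‖c‖ + ‖b‖ := norm_add_le c b
  have htri' : ‖b‖ ≤ ‖c + b‖ + ‖c‖ := by simpa using norm_sub_le (c + b) c
  set α := ‖c + b‖
  set β := ‖b‖
  set γ := ‖c‖
  rw [div_add_div _ _ (by positivity) (by positivity), mul_div_assoc', div_le_iff₀ (by positivity)]
  have key : β * (α + β - γ) + γ * (α + γ - β) ≤ 4 * α * β := by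
    nlinarith [mul_le_mul_of_nonneg_left (by linarith : β - γ ≤ α) hβ.le]
  nlinarith [mul_le_mul_of_nonneg_left key
    (by have := mul_pos hγ hα; nlinarith : 0 ≤ 2 * γ * α * (β + γ - α))]

end InnerProductSpace

theorem stmt6 :
    ∃ c₀ : ℝ, 0 < c₀ ∧
      ∀ a b c : EuclideanSpace ℝ (Fin 3), a ≠ 0 → b ≠ 0 → c ≠ 0 →
        a = b + c → ‖c‖ ≤ min ‖a‖ ‖b‖ →
        c₀ * (‖c‖ * ((1 - ⟪c, a⟫ / (‖c‖ * ‖a‖)) + (1 - ⟪b, a⟫ / (‖b‖ * ‖a‖))) +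
              ‖a‖ * ‖b‖ * ‖c‖ / ((1 + ‖a‖ * ‖b‖) * (1 + ‖c‖ ^ 2)))
          ≤ |p ‖a‖ - p ‖b‖ - p ‖c‖| := by
  refine ⟨1 / 24, by norm_num, fun a b c ha hb hc hab hmin => ?_⟩
  subst hab
  have hcb : ‖c‖ ≤ ‖b‖ := hmin.trans (min_le_right _ _)
  have htri : ‖b + c‖ ≤ ‖b‖ + ‖c‖ := norm_add_le b c
  have hangle := norm_mul_one_sub_cos_add_one_sub_cos_le hb hc ha hcb
  have hsize := mul_mul_div_le_two_mul_sq_mul_div (norm_nonneg (b + c))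
    (by linarith : ‖b + c‖ ≤ 2 * ‖b‖) (norm_nonneg c)
  have hgap := two_thirds_mul_sub_le_p_sub_p (norm_nonneg (b + c)) htri
  have hdefect := le_p_add_p_sub_p_add (norm_nonneg c) hcb
  have hsize_nonneg : 0 ≤ ‖b‖ ^ 2 * ‖c‖ / ((1 + ‖b‖ ^ 2) * (1 + ‖c‖ ^ 2)) := by positivity
  rw [abs_of_nonpos (by linarith)]
  linarith
end

section
/- Let n ≥ 1, s ≥ 0 and ε > 0 with s − ε ≥ 0, and let φ : ℝⁿ → [0,1] be a smooth function supported in the annulus {ξ : 1/2 ≤ |ξ| ≤ 2}. Then there exists a constant C > 0 (depending only on n, s, ε) such that for every measurable g : ℝⁿ → ℂ with A = (∫_{ℝⁿ} |ξ|^{2(s−ε)} |g(ξ)|² dξ)^{1/2} < ∞ and B = (∫_{ℝⁿ} |ξ|^{2(s+ε)} |g(ξ)|² dξ)^{1/2} < ∞, one has Σ_{k ∈ ℤ} ( ∫_{ℝⁿ} |ξ|^{2s} φ(ξ/2^k)² |g(ξ)|² dξ )^{1/2} ≤ C·(A + B). -/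
open MeasureTheory
open scoped ENNReal

theorem stmt19 (n : ℕ) (hn : 1 ≤ n) (s ε : ℝ) (hs : 0 ≤ s) (hε : 0 < ε)
    (hsε : 0 ≤ s - ε) :
    ∃ C : ℝ, 0 < C ∧
      ∀ φ : EuclideanSpace ℝ (Fin n) → ℝ, ContDiff ℝ (⊤ : ℕ∞) φ →
        (∀ ξ, φ ξ ∈ Set.Icc (0 : ℝ) 1) →
        (∀ ξ, φ ξ ≠ 0 → 1 / 2 ≤ ‖ξ‖ ∧ ‖ξ‖ ≤ 2) →
        ∀ g : EuclideanSpace ℝ (Fin n) → ℂ, Measurable g →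
          (∫⁻ ξ, (‖ξ‖₊ : ℝ≥0∞) ^ (2 * (s - ε)) * (‖g ξ‖₊ : ℝ≥0∞) ^ 2) ≠ ⊤ →
          (∫⁻ ξ, (‖ξ‖₊ : ℝ≥0∞) ^ (2 * (s + ε)) * (‖g ξ‖₊ : ℝ≥0∞) ^ 2) ≠ ⊤ →
          ∑' k : ℤ,
              (∫⁻ ξ, (‖ξ‖₊ : ℝ≥0∞) ^ (2 * s) *
                  ENNReal.ofReal (φ (((2 : ℝ) ^ k)⁻¹ • ξ) ^ 2) *
                  (‖g ξ‖₊ : ℝ≥0∞) ^ 2) ^ ((1 : ℝ) / 2) ≤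
            ENNReal.ofReal C *
              ((∫⁻ ξ, (‖ξ‖₊ : ℝ≥0∞) ^ (2 * (s - ε)) * (‖g ξ‖₊ : ℝ≥0∞) ^ 2) ^ ((1 : ℝ) / 2) +
               (∫⁻ ξ, (‖ξ‖₊ : ℝ≥0∞) ^ (2 * (s + ε)) * (‖g ξ‖₊ : ℝ≥0∞) ^ 2) ^ ((1 : ℝ) / 2)) := by
  classical
  have hε2 : (0:ℝ) ≤ 2 * ε := by linarith
  set r : ℝ≥0∞ := (2:ℝ≥0∞) ^ (-ε) with hr
  have hrlt : r < 1 := ENNReal.rpow_lt_one_of_one_lt_of_neg (by norm_num) (by linarith)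
  set S : ℝ≥0∞ := (1 - r)⁻¹ with hSdef
  have hSne : S ≠ ⊤ := by
    rw [hSdef, Ne, ENNReal.inv_eq_top, tsub_eq_zero_iff_le]
    exact not_le.2 hrlt
  have h2t : ∀ t : ℝ, (2:ℝ≥0∞) ^ t ≠ ⊤ := by
    intro t
    simp [ENNReal.rpow_eq_top_iff]
  set K : ℝ≥0∞ := (2:ℝ≥0∞) ^ (ε:ℝ) * S with hKdef
  have hKne : K ≠ ⊤ := ENNReal.mul_ne_top (h2t ε) hSne
  refine ⟨K.toReal + 1, add_pos_of_nonneg_of_pos ENNReal.toReal_nonneg one_pos, ?_⟩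
  intro φ hφsm hφ01 hφann g hg hA hB
  set A2 : ℝ≥0∞ := ∫⁻ ξ, (‖ξ‖₊ : ℝ≥0∞) ^ (2 * (s - ε)) * (‖g ξ‖₊ : ℝ≥0∞) ^ 2 with hA2def
  set B2 : ℝ≥0∞ := ∫⁻ ξ, (‖ξ‖₊ : ℝ≥0∞) ^ (2 * (s + ε)) * (‖g ξ‖₊ : ℝ≥0∞) ^ 2 with hB2def
  -- support estimate
  have hsupp : ∀ (k : ℤ) (ξ : EuclideanSpace ℝ (Fin n)), φ (((2:ℝ)^k)⁻¹ • ξ) ≠ 0 →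
      (2:ℝ≥0∞) ^ ((k:ℝ) - 1) ≤ (‖ξ‖₊ : ℝ≥0∞) ∧ (‖ξ‖₊ : ℝ≥0∞) ≤ (2:ℝ≥0∞) ^ ((k:ℝ) + 1) := by
    intro k ξ hne
    obtain ⟨h1, h2⟩ := hφann _ hne
    have hc : (0:ℝ) < (2:ℝ)^k := zpow_pos two_pos k
    have hnorm : ‖((2:ℝ)^k)⁻¹ • ξ‖ = ((2:ℝ)^k)⁻¹ * ‖ξ‖ := by
      rw [norm_smul, Real.norm_eq_abs, abs_of_pos (by positivity)]
    rw [hnorm] at h1 h2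
    have hlow : (2:ℝ)^k / 2 ≤ ‖ξ‖ := by
      have h1' := mul_le_mul_of_nonneg_left h1 hc.le
      rw [← mul_assoc, mul_inv_cancel₀ hc.ne', one_mul] at h1'
      linarith
    have hhigh : ‖ξ‖ ≤ 2 * (2:ℝ)^k := by
      have h2' := mul_le_mul_of_nonneg_left h2 hc.le
      rw [← mul_assoc, mul_inv_cancel₀ hc.ne', one_mul] at h2'
      linarith
    have hcast : ∀ m : ℤ, (2:ℝ≥0∞) ^ ((m:ℤ):ℝ) = ENNReal.ofReal ((2:ℝ)^m) := by
      intro m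
      rw [show (2:ℝ≥0∞) = ENNReal.ofReal 2 by norm_num,
        ENNReal.ofReal_rpow_of_pos two_pos, Real.rpow_intCast]
    have he1 : (2:ℝ≥0∞) ^ ((k:ℝ) - 1) = ENNReal.ofReal ((2:ℝ)^k / 2) := by
      rw [ENNReal.rpow_sub _ _ (by norm_num) (by norm_num), ENNReal.rpow_one, hcast k,
        ENNReal.ofReal_div_of_pos two_pos]
      norm_num
    have he2 : (2:ℝ≥0∞) ^ ((k:ℝ) + 1) = ENNReal.ofReal (2 * (2:ℝ)^k) := by
      rw [ENNReal.rpow_add _ _ (by norm_num) (by norm_num), ENNReal.rpow_one, hcast k,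
        ENNReal.ofReal_mul (by norm_num : (0:ℝ) ≤ 2)]
      norm_num [mul_comm]
    have hξ : (‖ξ‖₊ : ℝ≥0∞) = ENNReal.ofReal ‖ξ‖ := (ofReal_norm ξ).symm
    constructor
    · rw [he1, hξ]; exact ENNReal.ofReal_le_ofReal hlow
    · rw [he2, hξ]; exact ENNReal.ofReal_le_ofReal hhigh
  -- generic integral bound
  have hInt : ∀ (k : ℤ) (δ m : ℝ),
      (∀ ξ : EuclideanSpace ℝ (Fin n), φ (((2:ℝ)^k)⁻¹ • ξ) ≠ 0 →
        (‖ξ‖₊ : ℝ≥0∞) ^ (2*δ) ≤ (2:ℝ≥0∞) ^ m) →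
      (∫⁻ ξ, (‖ξ‖₊ : ℝ≥0∞) ^ (2 * s) *
          ENNReal.ofReal (φ (((2 : ℝ) ^ k)⁻¹ • ξ) ^ 2) * (‖g ξ‖₊ : ℝ≥0∞) ^ 2)
        ≤ (2:ℝ≥0∞) ^ m * ∫⁻ ξ, (‖ξ‖₊ : ℝ≥0∞) ^ (2 * (s - δ)) * (‖g ξ‖₊ : ℝ≥0∞) ^ 2 := by
    intro k δ m hm
    rw [← lintegral_const_mul' _ _ (h2t m)]
    refine lintegral_mono fun ξ => ?_
    by_cases hne : φ (((2:ℝ)^k)⁻¹ • ξ) = 0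
    · simp [hne]
    · have hx0 : (‖ξ‖₊ : ℝ≥0∞) ≠ 0 := by
        intro h0
        have hl := (hsupp k ξ hne).1
        rw [h0] at hl
        exact absurd hl (by simp [ENNReal.rpow_eq_zero_iff])
      have hsplit : (‖ξ‖₊ : ℝ≥0∞) ^ (2*s)
          = (‖ξ‖₊ : ℝ≥0∞) ^ (2*(s-δ)) * (‖ξ‖₊ : ℝ≥0∞) ^ (2*δ) := by
        rw [← ENNReal.rpow_add _ _ hx0 ENNReal.coe_ne_top]
        ring_nf
      have hφle : ENNReal.ofReal (φ (((2:ℝ)^k)⁻¹ • ξ) ^ 2) ≤ 1 := by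
        rw [ENNReal.ofReal_le_one]
        obtain ⟨hp0, hp1⟩ := hφ01 (((2:ℝ)^k)⁻¹ • ξ)
        nlinarith
      calc (‖ξ‖₊ : ℝ≥0∞) ^ (2*s) * ENNReal.ofReal (φ (((2:ℝ)^k)⁻¹ • ξ) ^ 2)
            * (‖g ξ‖₊ : ℝ≥0∞) ^ 2
          ≤ (‖ξ‖₊ : ℝ≥0∞) ^ (2*s) * 1 * (‖g ξ‖₊ : ℝ≥0∞) ^ 2 := by gcongr
        _ = (‖ξ‖₊ : ℝ≥0∞) ^ (2*(s-δ)) * (‖ξ‖₊ : ℝ≥0∞) ^ (2*δ) * (‖g ξ‖₊ : ℝ≥0∞) ^ 2 := by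
            rw [mul_one, hsplit]
        _ ≤ (‖ξ‖₊ : ℝ≥0∞) ^ (2*(s-δ)) * (2:ℝ≥0∞) ^ m * (‖g ξ‖₊ : ℝ≥0∞) ^ 2 := by
            gcongr
            exact hm ξ hne
        _ = (2:ℝ≥0∞) ^ m * ((‖ξ‖₊ : ℝ≥0∞) ^ (2*(s-δ)) * (‖g ξ‖₊ : ℝ≥0∞) ^ 2) := by ring
  -- the two concrete bounds
  have hIA : ∀ k : ℤ,
      (∫⁻ ξ, (‖ξ‖₊ : ℝ≥0∞) ^ (2 * s) *
          ENNReal.ofReal (φ (((2 : ℝ) ^ k)⁻¹ • ξ) ^ 2) * (‖g ξ‖₊ : ℝ≥0∞) ^ 2)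
        ≤ (2:ℝ≥0∞) ^ (2*ε*((k:ℝ)+1)) * A2 := by
    intro k
    refine hInt k ε (2*ε*((k:ℝ)+1)) fun ξ hne => ?_
    calc (‖ξ‖₊ : ℝ≥0∞) ^ (2*ε) ≤ ((2:ℝ≥0∞) ^ ((k:ℝ)+1)) ^ (2*ε) :=
          ENNReal.rpow_le_rpow (hsupp k ξ hne).2 hε2
      _ = (2:ℝ≥0∞) ^ (2*ε*((k:ℝ)+1)) := by rw [← ENNReal.rpow_mul]; ring_nf
  have hIB : ∀ k : ℤ,
      (∫⁻ ξ, (‖ξ‖₊ : ℝ≥0∞) ^ (2 * s) *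
          ENNReal.ofReal (φ (((2 : ℝ) ^ k)⁻¹ • ξ) ^ 2) * (‖g ξ‖₊ : ℝ≥0∞) ^ 2)
        ≤ (2:ℝ≥0∞) ^ (2*(-ε)*((k:ℝ)-1)) * B2 := by
    intro k
    have hsub : s - -ε = s + ε := by ring
    have := hInt k (-ε) (2*(-ε)*((k:ℝ)-1)) fun ξ hne => ?_
    · rwa [hsub] at this
    · have h1 : (‖ξ‖₊ : ℝ≥0∞) ^ (2*(-ε)) = ((‖ξ‖₊ : ℝ≥0∞) ^ (2*ε))⁻¹ := by
        rw [← ENNReal.rpow_neg]; ring_nf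
      have h2 : ((2:ℝ≥0∞) ^ ((k:ℝ)-1)) ^ (2*ε) ≤ (‖ξ‖₊ : ℝ≥0∞) ^ (2*ε) :=
        ENNReal.rpow_le_rpow (hsupp k ξ hne).1 hε2
      calc (‖ξ‖₊ : ℝ≥0∞) ^ (2*(-ε)) = ((‖ξ‖₊ : ℝ≥0∞) ^ (2*ε))⁻¹ := h1
        _ ≤ (((2:ℝ≥0∞) ^ ((k:ℝ)-1)) ^ (2*ε))⁻¹ := ENNReal.inv_le_inv' h2
        _ = (2:ℝ≥0∞) ^ (2*(-ε)*((k:ℝ)-1)) := by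
            rw [← ENNReal.rpow_mul, ← ENNReal.rpow_neg]; ring_nf
  -- square roots
  have hsqrt : ∀ (x J : ℝ≥0∞) (t : ℝ), x ≤ (2:ℝ≥0∞) ^ t * J →
      x ^ ((1:ℝ)/2) ≤ (2:ℝ≥0∞) ^ (t/2) * J ^ ((1:ℝ)/2) := by
    intro x J t h
    calc x ^ ((1:ℝ)/2) ≤ ((2:ℝ≥0∞) ^ t * J) ^ ((1:ℝ)/2) :=
          ENNReal.rpow_le_rpow h (by norm_num)
      _ = ((2:ℝ≥0∞) ^ t) ^ ((1:ℝ)/2) * J ^ ((1:ℝ)/2) :=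
          ENNReal.mul_rpow_of_nonneg _ _ (by norm_num)
      _ = (2:ℝ≥0∞) ^ (t/2) * J ^ ((1:ℝ)/2) := by rw [← ENNReal.rpow_mul]; ring_nf
  set A : ℝ≥0∞ := A2 ^ ((1:ℝ)/2) with hAdef
  set B : ℝ≥0∞ := B2 ^ ((1:ℝ)/2) with hBdef
  set u : ℕ → ℝ≥0∞ := fun m => (2:ℝ≥0∞) ^ (ε:ℝ) * B * r ^ m with hudef
  set v : ℕ → ℝ≥0∞ := fun m => A * r ^ m with hvdef
  have hrm : ∀ m : ℕ, r ^ m = (2:ℝ≥0∞) ^ (-ε * (m:ℝ)) := by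
    intro m
    rw [hr, ← ENNReal.rpow_natCast ((2:ℝ≥0∞) ^ (-ε)) m, ← ENNReal.rpow_mul]
  have hFG : ∀ k : ℤ,
      (∫⁻ ξ, (‖ξ‖₊ : ℝ≥0∞) ^ (2 * s) *
          ENNReal.ofReal (φ (((2 : ℝ) ^ k)⁻¹ • ξ) ^ 2) *
          (‖g ξ‖₊ : ℝ≥0∞) ^ 2) ^ ((1:ℝ)/2) ≤ Int.rec u v k := by
    intro k
    cases k with
    | ofNat m =>
        have h := hsqrt _ B2 (2*(-ε)*(((Int.ofNat m : ℤ):ℝ)-1)) (hIB (Int.ofNat m))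
        refine h.trans_eq ?_
        show (2:ℝ≥0∞) ^ (2*(-ε)*(((Int.ofNat m : ℤ):ℝ)-1)/2) * B
            = (2:ℝ≥0∞) ^ (ε:ℝ) * B * r ^ m
        rw [show 2*(-ε)*(((Int.ofNat m : ℤ):ℝ)-1)/2 = ε + -ε*(m:ℝ) by push_cast [Int.ofNat_eq_coe]; ring,
          ENNReal.rpow_add _ _ (by norm_num) (by norm_num), hrm m]
        ring
    | negSucc m =>
        have h := hsqrt _ A2 (2*ε*(((Int.negSucc m : ℤ):ℝ)+1)) (hIA (Int.negSucc m))
        refine h.trans_eq ?_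
        show (2:ℝ≥0∞) ^ (2*ε*(((Int.negSucc m : ℤ):ℝ)+1)/2) * A = A * r ^ m
        rw [show 2*ε*(((Int.negSucc m : ℤ):ℝ)+1)/2 = -ε*(m:ℝ) by
            push_cast [Int.cast_negSucc]; ring,
          hrm m]
        ring
  have hsumG : ∑' k : ℤ, (Int.rec u v k : ℝ≥0∞) = (∑' m : ℕ, u m) + ∑' m : ℕ, v m :=
    tsum_int_rec ENNReal.summable ENNReal.summable
  have hgeo : ∑' m : ℕ, r ^ m = S := by rw [hSdef, ENNReal.tsum_geometric]
  have hsumu : ∑' m : ℕ, u m = (2:ℝ≥0∞) ^ (ε:ℝ) * B * S := by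
    rw [hudef]
    rw [ENNReal.tsum_mul_left, hgeo, mul_comm]
  have hsumv : ∑' m : ℕ, v m = A * S := by
    rw [hvdef]
    rw [ENNReal.tsum_mul_left, hgeo]
  have hone : (1:ℝ≥0∞) ≤ (2:ℝ≥0∞) ^ (ε:ℝ) := by
    calc (1:ℝ≥0∞) = (2:ℝ≥0∞) ^ (0:ℝ) := by rw [ENNReal.rpow_zero]
      _ ≤ (2:ℝ≥0∞) ^ (ε:ℝ) := ENNReal.rpow_le_rpow_of_exponent_le (by norm_num) hε.le
  have hKC : K ≤ ENNReal.ofReal (K.toReal + 1) := by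
    rw [ENNReal.ofReal_add ENNReal.toReal_nonneg zero_le_one,
      ENNReal.ofReal_toReal hKne]
    exact le_self_add
  calc ∑' k : ℤ,
        (∫⁻ ξ, (‖ξ‖₊ : ℝ≥0∞) ^ (2 * s) *
            ENNReal.ofReal (φ (((2 : ℝ) ^ k)⁻¹ • ξ) ^ 2) *
            (‖g ξ‖₊ : ℝ≥0∞) ^ 2) ^ ((1:ℝ)/2)
      ≤ ∑' k : ℤ, (Int.rec u v k : ℝ≥0∞) := ENNReal.tsum_le_tsum hFG
    _ = (2:ℝ≥0∞) ^ (ε:ℝ) * B * S + A * S := by rw [hsumG, hsumu, hsumv]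
    _ ≤ K * B + K * A := by
        refine add_le_add (le_of_eq (by rw [hKdef]; ring)) ?_
        rw [hKdef, mul_comm A S]
        exact mul_le_mul_left (le_mul_of_one_le_left' hone) A
    _ = K * (A + B) := by ring
    _ ≤ ENNReal.ofReal (K.toReal + 1) * (A + B) := by gcongr
end
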